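/- A 2-connected signed graph Σ = (G, σ) is balanced if and only if its n-th power signed graph Σ^n = (G^n, σ′) is balanced. -/

import Mathlib

open SimpleGraph Polynomial

variable {V : Type*}

/-- The sign of a walk: the product of the signs of its edges. -/
def walkSign {G : SimpleGraph V} (sg : V → V → ℤ) {u v : V} (p : G.Walk u v) : ℤ :=
  (p.darts.map fun d => sg d.toProd.1 d.toProd.2).prod

/-- `sigmaMax G sg u v`: the maximum sign over all shortest `u`–`v` paths. -/
noncomputable def sigmaMax (G : SimpleGraph V) (sg : V → V → ℤ) (u v : V) : ℤ := by
  classical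
  exact if ∃ p : G.Walk u v, p.length = G.dist u v ∧ walkSign sg p = 1 then 1 else -1

/-- `sigmaMin G sg u v`: the minimum sign over all shortest `u`–`v` paths. -/
noncomputable def sigmaMin (G : SimpleGraph V) (sg : V → V → ℤ) (u v : V) : ℤ := by
  classical
  exact if ∃ p : G.Walk u v, p.length = G.dist u v ∧ walkSign sg p = -1 then -1 else 1

/-- `u` and `v` are distance-compatible: all shortest `u`–`v` paths have the same sign. -/
def pairCompatible (G : SimpleGraph V) (sg : V → V → ℤ) (u v : V) : Prop :=
  ∀ p q : G.Walk u v, p.length = G.dist u v → q.length = G.dist u v →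
    walkSign sg p = walkSign sg q

/-- The `n`-th power graph: `u ~ v` iff `u ≠ v` and `d(u,v) ≤ n`. -/
def powerGraph (G : SimpleGraph V) (n : ℕ) : SimpleGraph V where
  Adj u v := u ≠ v ∧ G.dist u v ≤ n
  symm := by
    constructor
    intro u v h
    exact ⟨h.1.symm, by rw [SimpleGraph.dist_comm]; exact h.2⟩
  loopless := by
    constructor
    intro u h
    exact h.1 rfl

/-- A signed graph is balanced if every cycle has positive sign. -/
def SBalanced (G : SimpleGraph V) (sg : V → V → ℤ) : Prop :=
  ∀ ⦃u : V⦄ (p : G.Walk u u), p.IsCycle → walkSign sg p = 1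

/-- 2-connectedness: at least 3 vertices and deleting any vertex leaves a connected graph. -/
def TwoConnected [Fintype V] (G : SimpleGraph V) : Prop :=
  3 ≤ Fintype.card V ∧ ∀ v : V, ((⊤ : G.Subgraph).deleteVerts {v}).coe.Connected

/-- Signature of the associated signed complete graph `K^{D^max}(Σ)`:
edges of `G` keep their sign, non-adjacent pairs get `sigmaMax`. -/
noncomputable def kSigMax (G : SimpleGraph V) (sg : V → V → ℤ) (u v : V) : ℤ := by
  classical
  exact if G.Adj u v then sg u v else sigmaMax G sg u v

/-- Signature of the associated signed complete graph `K^{D^min}(Σ)`. -/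
noncomputable def kSigMin (G : SimpleGraph V) (sg : V → V → ℤ) (u v : V) : ℤ := by
  classical
  exact if G.Adj u v then sg u v else sigmaMin G sg u v


/-!
In a balanced signed graph every closed walk is positive: shortcutting a closed walk as in
`Walk.bypass` only deletes closed detours that are cycles or an edge traversed back and forth.
Hence all `u`–`v` walks have the same sign, `sigmaMax G sg u v` is that common sign, and every
walk in any graph signed by `sigmaMax G sg` has the sign of a `G`-walk between its ends, so
its closed walks are positive. Conversely `G ≤ G^n` for `n ≥ 1`, and `sigmaMax G sg` agrees
with `sg` on the edges of `G`.
-/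

section

variable {G H : SimpleGraph V} {sg sg' : V → V → ℤ}

section walkSign

@[simp] lemma walkSign_nil {u : V} : walkSign sg (Walk.nil : G.Walk u u) = 1 := rfl

@[simp] lemma walkSign_cons {u v w : V} (h : G.Adj u v) (p : G.Walk v w) :
    walkSign sg (Walk.cons h p) = sg u v * walkSign sg p := by
  simp [walkSign]

lemma walkSign_append {u v w : V} (p : G.Walk u v) (q : G.Walk v w) :
    walkSign sg (p.append q) = walkSign sg p * walkSign sg q := by
  simp [walkSign, Walk.darts_append]

lemma walkSign_reverse (hsym : ∀ u v, sg u v = sg v u) {u v : V} (p : G.Walk u v) :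
    walkSign sg p.reverse = walkSign sg p := by
  simp only [walkSign, Walk.darts_reverse, List.map_reverse, List.prod_reverse, List.map_map]
  exact congrArg List.prod (List.map_congr_left fun d _ => (hsym _ _).symm)

lemma walkSign_congr (h : ∀ a b, G.Adj a b → sg a b = sg' a b) {u v : V} (p : G.Walk u v) :
    walkSign sg p = walkSign sg' p :=
  congrArg List.prod (List.map_congr_left fun d _ => h _ _ d.adj)

lemma walkSign_mapLe (hle : G ≤ H) {u v : V} (p : G.Walk u v) :
    walkSign sg (p.mapLe hle) = walkSign sg p := by
  simp only [walkSign, Walk.mapLe, Walk.darts_map, List.map_map]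
  rfl

lemma walkSign_eq_one_or_eq_neg_one (hval : ∀ u v, G.Adj u v → sg u v = 1 ∨ sg u v = -1)
    {u v : V} (p : G.Walk u v) : walkSign sg p = 1 ∨ walkSign sg p = -1 := by
  induction p with
  | nil => exact Or.inl rfl
  | cons h q ih =>
    rw [walkSign_cons]
    rcases hval _ _ h with h1 | h1 <;> rcases ih with h2 | h2 <;> simp [h1, h2]

lemma walkSign_of_length_eq_one {u v : V} (p : G.Walk u v) (hp : p.length = 1) :
    walkSign sg p = sg u v := by
  obtain _ | ⟨h, _ | ⟨h', q⟩⟩ := p <;> simp_all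

end walkSign

lemma SBalanced.of_le (hle : G ≤ H) (hsg : ∀ a b, G.Adj a b → sg' a b = sg a b)
    (hbal : SBalanced H sg') : SBalanced G sg := fun u p hp => by
  rw [← walkSign_congr hsg, ← walkSign_mapLe hle]
  exact hbal _ (hp.mapLe hle)

lemma sigmaMax_eq_walkSign_of_pairCompatible
    (hval : ∀ u v, G.Adj u v → sg u v = 1 ∨ sg u v = -1) {u v : V}
    (hc : pairCompatible G sg u v) (p : G.Walk u v) (hp : p.length = G.dist u v) :
    sigmaMax G sg u v = walkSign sg p := by
  classical
  rcases walkSign_eq_one_or_eq_neg_one hval p with h | h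
  · rw [sigmaMax, if_pos ⟨p, hp, h⟩, h]
  · rw [sigmaMax, if_neg, h]
    rintro ⟨q, hq, hq1⟩
    rw [hc q p hq hp, h] at hq1
    norm_num at hq1

lemma sigmaMax_of_adj (hval : ∀ u v, G.Adj u v → sg u v = 1 ∨ sg u v = -1) {u v : V}
    (h : G.Adj u v) : sigmaMax G sg u v = sg u v := by
  have hdist : G.dist u v = 1 := dist_eq_one_iff_adj.mpr h
  have hc : pairCompatible G sg u v := fun p q hp hq => by
    rw [walkSign_of_length_eq_one p (hp.trans hdist),
      walkSign_of_length_eq_one q (hq.trans hdist)]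
  rw [sigmaMax_eq_walkSign_of_pairCompatible hval hc h.toWalk hdist.symm,
    walkSign_of_length_eq_one _ rfl]

section Balanced

variable (hbal : SBalanced G sg) (hsym : ∀ u v, sg u v = sg v u)
  (hval : ∀ u v, G.Adj u v → sg u v = 1 ∨ sg u v = -1)
include hbal hsym hval

/-- A path `q` closed up by an edge is a cycle unless it is that very edge. -/
lemma SBalanced.walkSign_cons_of_isPath {u v : V} (h : G.Adj u v) {q : G.Walk v u}
    (hq : q.IsPath) : walkSign sg (Walk.cons h q) = 1 := by
  by_cases hmem : s(u, v) ∈ q.edges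
  · have hlen : q.length = 1 := hq.length_eq_one_of_mem_edges (Sym2.eq_swap ▸ hmem)
    rw [walkSign_cons, walkSign_of_length_eq_one q hlen, hsym v u]
    rcases hval u v h with h1 | h1 <;> rw [h1] <;> norm_num
  · exact hbal _ ((Walk.cons_isCycle_iff q h).mpr ⟨hq, hmem⟩)

lemma SBalanced.walkSign_bypass [DecidableEq V] {u v : V} (p : G.Walk u v) :
    walkSign sg p.bypass = walkSign sg p := by
  induction p with
  | nil => rfl
  | @cons u v w h p ih =>
    simp only [Walk.bypass]
    split_ifs with hs
    · have hdetour := hbal.walkSign_cons_of_isPath hsym hval h (p.bypass_isPath.takeUntil hs)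
      rw [walkSign_cons] at hdetour
      have hsplit := congrArg (walkSign sg) (p.bypass.take_spec hs)
      rw [walkSign_append, ih] at hsplit
      rw [walkSign_cons, ← hsplit, ← mul_assoc, hdetour, one_mul]
    · rw [walkSign_cons, walkSign_cons, ih]

lemma SBalanced.walkSign_eq_one {u : V} (p : G.Walk u u) : walkSign sg p = 1 := by
  classical
  rw [← hbal.walkSign_bypass hsym hval, (Walk.isPath_iff_nil.mp p.bypass_isPath).eq_nil,
    walkSign_nil]

lemma SBalanced.walkSign_eq {u v : V} (p q : G.Walk u v) : walkSign sg p = walkSign sg q := by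
  have hp := hbal.walkSign_eq_one hsym hval (p.append q.reverse)
  have hq := hbal.walkSign_eq_one hsym hval (q.append q.reverse)
  rw [walkSign_append, walkSign_reverse hsym] at hp hq
  calc walkSign sg p = walkSign sg p * (walkSign sg q * walkSign sg q) := by rw [hq, mul_one]
    _ = walkSign sg q := by rw [← mul_assoc, hp, one_mul]

lemma SBalanced.pairCompatible (u v : V) : pairCompatible G sg u v :=
  fun p q _ _ => hbal.walkSign_eq hsym hval p q

lemma SBalanced.sigmaMax_eq_walkSign {u v : V} (w : G.Walk u v) :
    sigmaMax G sg u v = walkSign sg w := by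
  obtain ⟨p, hp⟩ := w.reachable.exists_walk_length_eq_dist
  rw [sigmaMax_eq_walkSign_of_pairCompatible hval (hbal.pairCompatible hsym hval u v) p hp,
    hbal.walkSign_eq hsym hval p w]

lemma SBalanced.walkSign_sigmaMax (hconn : G.Connected) {u v : V} (p : H.Walk u v)
    (w : G.Walk u v) : walkSign (sigmaMax G sg) p = walkSign sg w := by
  induction p with
  | nil => exact (hbal.walkSign_eq_one hsym hval w).symm
  | @cons u x v _ p ih =>
    obtain ⟨wux⟩ := hconn u x
    obtain ⟨wxv⟩ := hconn x v
    rw [walkSign_cons, hbal.sigmaMax_eq_walkSign hsym hval wux, ih wxv, ← walkSign_append,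
      hbal.walkSign_eq hsym hval _ w]

end Balanced

lemma le_powerGraph {n : ℕ} (hn : 1 ≤ n) : G ≤ powerGraph G n := fun _ _ h =>
  ⟨h.ne, (dist_eq_one_iff_adj.mpr h).trans_le hn⟩

end

theorem balanced_iff_power_balanced_general {V : Type*} (G : SimpleGraph V) (sg : V → V → ℤ)
    (hconn : G.Connected) (hsym : ∀ u v, sg u v = sg v u)
    (hval : ∀ u v, G.Adj u v → sg u v = 1 ∨ sg u v = -1)
    (n : ℕ) (hn : 1 ≤ n) :
    SBalanced G sg ↔ SBalanced (powerGraph G n) (sigmaMax G sg) :=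
  ⟨fun hbal _ p _ => hbal.walkSign_sigmaMax hsym hval hconn p Walk.nil,
    SBalanced.of_le (le_powerGraph hn) fun _ _ h => sigmaMax_of_adj hval h⟩

theorem balanced_iff_power_balanced {V : Type*} [Fintype V] (G : SimpleGraph V) (sg : V → V → ℤ)
    (hconn : G.Connected) (hsym : ∀ u v, sg u v = sg v u)
    (hval : ∀ u v, G.Adj u v → sg u v = 1 ∨ sg u v = -1)
    (h2 : TwoConnected G) (n : ℕ) (hn : 1 ≤ n) :
    SBalanced G sg ↔ SBalanced (powerGraph G n) (sigmaMax G sg) :=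
  balanced_iff_power_balanced_general G sg hconn hsym hval n hn
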